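/- Fix an integer n ≥ 1. Let T̃_n = {((y₁, y₂), (u₁, u₂)) ∈ (ℂ² ∖ {0}) × ℂ² : u₁y₁ⁿ = u₂y₂ⁿ} with the ℂ* action λ: ((y₁, y₂), (u₁, u₂)) ↦ ((λy₁, λy₂), (u₁, u₂)), and let Ỹ_n = {((y₁, y₂), (x₁, x₂)) ∈ (ℂ² ∖ {0}) × ℂ² : x₁y₁^{n−1} = x₂y₂^{n−1}} with the ℂ* action λ: ((y₁, y₂), (x₁, x₂)) ↦ ((λy₁, λy₂), (λ^{-1}x₁, λ^{-1}x₂)). Then the map Ỹ_n → T̃_n given by ((y₁, y₂), (x₁, x₂)) ↦ ((y₁, y₂), (x₁y₂, x₂y₁)) is well defined, ℂ*-equivariant, and induces a bijection between the orbit sets Ỹ_n/ℂ* and T̃_n/ℂ*. -/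

import Mathlib

/-- Points of `Ỹ_n = {((y₁,y₂),(x₁,x₂)) : (y₁,y₂) ≠ 0, x₁y₁^{n−1} = x₂y₂^{n−1}}`. -/
def YSub (n : ℕ) :=
  {p : (ℂ × ℂ) × ℂ × ℂ // p.1 ≠ 0 ∧ p.2.1 * p.1.1 ^ (n - 1) = p.2.2 * p.1.2 ^ (n - 1)}

/-- Points of `T̃_n = {((y₁,y₂),(u₁,u₂)) : (y₁,y₂) ≠ 0, u₁y₁ⁿ = u₂y₂ⁿ}`. -/
def TSub (n : ℕ) :=
  {p : (ℂ × ℂ) × ℂ × ℂ // p.1 ≠ 0 ∧ p.2.1 * p.1.1 ^ n = p.2.2 * p.1.2 ^ n}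

/-- The orbit relation on `Ỹ_n`: λ·((y₁,y₂),(x₁,x₂)) = ((λy₁,λy₂),(λ⁻¹x₁,λ⁻¹x₂)). -/
def relY (n : ℕ) : YSub n → YSub n → Prop := fun p p' =>
  ∃ lam : ℂ, lam ≠ 0 ∧
    p'.1.1 = (lam * p.1.1.1, lam * p.1.1.2) ∧
    p'.1.2 = (lam⁻¹ * p.1.2.1, lam⁻¹ * p.1.2.2)

/-- The orbit relation on `T̃_n`: λ·((y₁,y₂),(u₁,u₂)) = ((λy₁,λy₂),(u₁,u₂)). -/
def relT (n : ℕ) : TSub n → TSub n → Prop := fun p p' =>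
  ∃ lam : ℂ, lam ≠ 0 ∧
    p'.1.1 = (lam * p.1.1.1, lam * p.1.1.2) ∧ p'.1.2 = p.1.2

/-!
Over a point `y ≠ 0` of `ℂ²`, the map `x ↦ (x₁y₂, x₂y₁)` is a bijection from the line
`x₁y₁^{n-1} = x₂y₂^{n-1}` onto the line `u₁y₁ⁿ = u₂y₂ⁿ`: if, say, `y₁ ≠ 0`, then `x₂ = u₂ / y₁` and
`x₁` is determined by the equation of the first line. Since the map is equivariant and both
actions move `y` in the same way, this bijection of fibres descends to the orbit sets.
-/

theorem Quot.map_injective {α β : Type*} {r : α → α → Prop} {s : β → β → Prop}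
    (hs : Equivalence s) {f : α → β} (hf : ∀ ⦃a b⦄, r a b → s (f a) (f b))
    (hf_refl : ∀ ⦃a b⦄, s (f a) (f b) → r a b) : Function.Injective (Quot.map f hf) := by
  rintro ⟨a⟩ ⟨b⟩ h
  exact Quot.sound (hf_refl (hs.eqvGen_iff.mp (Quot.eq.mp h)))

theorem ne_zero_or_ne_zero_of_mk_ne_zero {M N : Type*} [Zero M] [Zero N] {x : M} {y : N}
    (h : (x, y) ≠ 0) : x ≠ 0 ∨ y ≠ 0 := by
  rwa [Ne, Prod.mk_eq_zero, not_and_or] at h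

section Coordinates

variable {K : Type*}

theorem mul_mul_pow_eq_of_mul_pow_pred_eq [CommRing K] {n : ℕ} (hn : n ≠ 0) {y₁ y₂ x₁ x₂ : K}
    (h : x₁ * y₁ ^ (n - 1) = x₂ * y₂ ^ (n - 1)) : x₁ * y₂ * y₁ ^ n = x₂ * y₁ * y₂ ^ n := by
  rw [← pow_sub_one_mul hn y₁, ← pow_sub_one_mul hn y₂]
  linear_combination y₁ * y₂ * h

theorem eq_and_eq_of_mul_pow_eq [CommRing K] [NoZeroDivisors K] {m : ℕ}
    {y₁ y₂ x₁ x₂ x₁' x₂' : K} (hy : y₁ ≠ 0 ∨ y₂ ≠ 0)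
    (h : x₁ * y₁ ^ m = x₂ * y₂ ^ m) (h' : x₁' * y₁ ^ m = x₂' * y₂ ^ m)
    (h₁ : x₁ * y₂ = x₁' * y₂) (h₂ : x₂ * y₁ = x₂' * y₁) : x₁ = x₁' ∧ x₂ = x₂' := by
  wlog hy₁ : y₁ ≠ 0 generalizing y₁ y₂ x₁ x₂ x₁' x₂'
  · exact (this hy.symm h.symm h'.symm h₂ h₁ (hy.resolve_left hy₁)).symm
  have e₂ : x₂ = x₂' := mul_right_cancel₀ hy₁ h₂
  have e₁ : (x₁ - x₁') * y₁ ^ m = 0 := by linear_combination h - h' + y₂ ^ m * e₂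
  exact ⟨sub_eq_zero.mp ((mul_eq_zero.mp e₁).resolve_right (pow_ne_zero m hy₁)), e₂⟩

theorem exists_mul_pow_pred_eq [Field K] {n : ℕ} (hn : n ≠ 0) {y₁ y₂ u₁ u₂ : K}
    (hy : y₁ ≠ 0 ∨ y₂ ≠ 0) (hu : u₁ * y₁ ^ n = u₂ * y₂ ^ n) :
    ∃ x₁ x₂ : K, x₁ * y₁ ^ (n - 1) = x₂ * y₂ ^ (n - 1) ∧ x₁ * y₂ = u₁ ∧ x₂ * y₁ = u₂ := by
  wlog hy₁ : y₁ ≠ 0 generalizing y₁ y₂ u₁ u₂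
  · obtain ⟨x₂, x₁, h, h₂, h₁⟩ := this hy.symm hu.symm (hy.resolve_left hy₁)
    exact ⟨x₁, x₂, h.symm, h₁, h₂⟩
  refine ⟨u₂ * y₂ ^ (n - 1) / y₁ ^ n, u₂ / y₁, ?_, ?_, ?_⟩
  · rw [← pow_sub_one_mul hn y₁]
    field_simp
  · rw [← pow_sub_one_mul hn y₂] at hu
    field_simp
    linear_combination hu.symm
  · field_simp

end Coordinates

def toTSub (n : ℕ) (hn : 1 ≤ n) (p : YSub n) : TSub n :=
  ⟨(p.1.1, (p.1.2.1 * p.1.1.2, p.1.2.2 * p.1.1.1)), p.2.1,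
    mul_mul_pow_eq_of_mul_pow_pred_eq (by omega) p.2.2⟩

theorem equivalence_relT (n : ℕ) : Equivalence (relT n) where
  refl _ := ⟨1, one_ne_zero, by simp, rfl⟩
  symm := by
    rintro p q ⟨l, hl, hy, hu⟩
    exact ⟨l⁻¹, inv_ne_zero hl, by simp [hy, hl], hu.symm⟩
  trans := by
    rintro p q r ⟨l, hl, hy, hu⟩ ⟨l', hl', hy', hu'⟩
    exact ⟨l' * l, mul_ne_zero hl' hl, by simp [hy', hy, mul_assoc], hu'.trans hu⟩

theorem relT_toTSub (n : ℕ) (hn : 1 ≤ n) ⦃p q : YSub n⦄ (h : relY n p q) :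
    relT n (toTSub n hn p) (toTSub n hn q) := by
  obtain ⟨l, hl, hy, hx⟩ := h
  refine ⟨l, hl, hy, ?_⟩
  simp only [toTSub, hy, hx, Prod.mk.injEq]
  constructor <;> field_simp

theorem relY_of_relT_toTSub (n : ℕ) (hn : 1 ≤ n) ⦃p q : YSub n⦄
    (h : relT n (toTSub n hn p) (toTSub n hn q)) : relY n p q := by
  revert h
  obtain ⟨⟨⟨y₁, y₂⟩, x₁, x₂⟩, hy, hx⟩ := p
  obtain ⟨⟨⟨z₁, z₂⟩, x₁', x₂'⟩, -, hx'⟩ := q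
  rintro ⟨l, hl, hz, hu⟩
  simp only [toTSub, Prod.mk.injEq] at hz hu hx hx'
  obtain ⟨rfl, rfl⟩ := hz
  refine ⟨l, hl, rfl, ?_⟩
  have hly : l * y₁ ≠ 0 ∨ l * y₂ ≠ 0 := by
    simpa [hl] using ne_zero_or_ne_zero_of_mk_ne_zero hy
  have hlx : l⁻¹ * x₁ * (l * y₁) ^ (n - 1) = l⁻¹ * x₂ * (l * y₂) ^ (n - 1) := by
    rw [mul_pow, mul_pow]
    linear_combination l⁻¹ * l ^ (n - 1) * hx
  obtain ⟨e₁, e₂⟩ := eq_and_eq_of_mul_pow_eq hly hx' hlx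
    (by rw [hu.1]; field_simp) (by rw [hu.2]; field_simp)
  exact Prod.ext e₁ e₂

theorem toTSub_surjective (n : ℕ) (hn : 1 ≤ n) : Function.Surjective (toTSub n hn) := by
  rintro ⟨⟨⟨y₁, y₂⟩, u₁, u₂⟩, hy, hu⟩
  obtain ⟨x₁, x₂, hx, rfl, rfl⟩ :=
    exists_mul_pow_pred_eq (by omega) (ne_zero_or_ne_zero_of_mk_ne_zero hy) hu
  exact ⟨⟨((y₁, y₂), x₁, x₂), hy, hx⟩, rfl⟩

/-- the map ((y₁,y₂),(x₁,x₂)) ↦ ((y₁,y₂),(x₁y₂,x₂y₁)) is a well-defined,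
ℂ*-equivariant map Ỹ_n → T̃_n inducing a bijection Ỹ_n/ℂ* → T̃_n/ℂ*. -/
theorem stmt17 (n : ℕ) (hn : 1 ≤ n) :
    ∃ g : YSub n → TSub n,
      (∀ p, (g p).1 = (p.1.1, (p.1.2.1 * p.1.1.2, p.1.2.2 * p.1.1.1))) ∧
      (∀ p p', relY n p p' → relT n (g p) (g p')) ∧
      ∃ f : Quot (relY n) → Quot (relT n),
        Function.Bijective f ∧ ∀ p, f (Quot.mk (relY n) p) = Quot.mk (relT n) (g p) :=
  ⟨toTSub n hn, fun _ => rfl, relT_toTSub n hn, Quot.map _ (relT_toTSub n hn),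
    ⟨Quot.map_injective (equivalence_relT n) _ (relY_of_relT_toTSub n hn),
      Quot.map_surjective _ (toTSub_surjective n hn)⟩, fun _ => rfl⟩
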